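/- Let K be a field equipped with an absolute value |·| : K → ℝ. Fix integers N ≥ 1 and d ≥ 2 and let F = (F_0, …, F_N), where each F_i ∈ K[x_0, …, x_N] is homogeneous of degree d. Let 𝒦 = {P ∈ K^{N+1} : ‖F^k(P)‖ does not tend to ∞ as k → ∞} be the homogeneous filled Julia set of F. Let I ⊆ K[x_0, …, x_N] be a set of homogeneous polynomials whose common zero locus Z(I) ⊆ K^{N+1} satisfies F(Z(I)) ⊆ Z(I), and let R ≥ 0 be a real number with ‖P‖ ≤ R for all P ∈ 𝒦 ∩ Z(I). Then there is a constant C depending only on d and N with the following property: for every integer n ≥ 2, every integer c ≥ 1, every K-linearly independent family η_1, …, η_c of degree-n polynomials of special form relative to F with at most log(n)/log((2N+2)/(2N+1)) factors each, and every tuple P_1, …, P_c of points of 𝒦 ∩ Z(I), one has |det(η_j(P_i))_{1 ≤ i, j ≤ c}| ≤ exp(C · max{log R, 1} · (log n) · c). -/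
import Mathlib


open MvPolynomial Filter

/-- The coordinate polynomials `F_i^{(k)}` of the `k`-th iterate of the polynomial
self-map of `K^{N+1}` defined by `F = (F_0, …, F_N)`; `F^0` is the identity. -/
noncomputable def iterF {K : Type*} [Field K] {N : ℕ}
    (F : Fin (N + 1) → MvPolynomial (Fin (N + 1)) K) :
    ℕ → Fin (N + 1) → MvPolynomial (Fin (N + 1)) K
  | 0, i => X i
  | k + 1, i => aeval (iterF F k) (F i)

/-- The sup-norm `‖P‖ = max_i |P_i|` of a point `P ∈ K^{N+1}`. -/
noncomputable def supNorm {K : Type*} [Field K] (v : AbsoluteValue K ℝ) {N : ℕ}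
    (P : Fin (N + 1) → K) : ℝ :=
  Finset.univ.sup' Finset.univ_nonempty fun i => v (P i)

/-- The homogeneous filled Julia set of `F`:
points whose forward orbit sup-norms do not tend to infinity. -/
noncomputable def juliaSet {K : Type*} [Field K] (v : AbsoluteValue K ℝ) {N : ℕ}
    (F : Fin (N + 1) → MvPolynomial (Fin (N + 1)) K) : Set (Fin (N + 1) → K) :=
  {P | ¬ Tendsto (fun k => supNorm v fun i => eval P (iterF F k i)) atTop atTop}

/-- The common zero locus in `K^{N+1}` of a set `I` of polynomials. -/
def zeroLocus {K : Type*} [Field K] {N : ℕ}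
    (I : Set (MvPolynomial (Fin (N + 1)) K)) : Set (Fin (N + 1) → K) :=
  {P | ∀ g ∈ I, eval P g = 0}

/-- A degree-`n` polynomial of special form relative to `F`, with at most `tmax` factors:
`x^α · ∏_{l} (F_{i_l}^{(k_l)})^{j_l}` with `deg x^α < d(N+1)`, `k_l ≥ 1`, `1 ≤ j_l ≤ d−1`. -/
def IsSpecialForm {K : Type*} [Field K] {N : ℕ}
    (F : Fin (N + 1) → MvPolynomial (Fin (N + 1)) K) (d n : ℕ) (tmax : ℝ)
    (η : MvPolynomial (Fin (N + 1)) K) : Prop :=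
  ∃ (α : Fin (N + 1) →₀ ℕ) (t : ℕ) (idx : Fin t → Fin (N + 1)) (k j : Fin t → ℕ),
    (∑ s, α s) < d * (N + 1) ∧ (t : ℝ) ≤ tmax ∧
    (∀ l, 1 ≤ k l) ∧ (∀ l, 1 ≤ j l ∧ j l ≤ d - 1) ∧
    η = monomial α (1 : K) * ∏ l, iterF F (k l) (idx l) ^ j l ∧
    η.IsHomogeneous n

/-- `eval` commutes with `aeval` substitution. -/
lemma eval_aeval' {K : Type*} [Field K] {N : ℕ} (P : Fin (N + 1) → K)
    (g : Fin (N + 1) → MvPolynomial (Fin (N + 1)) K) (q : MvPolynomial (Fin (N + 1)) K) :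
    eval P (aeval g q) = eval (fun j => eval P (g j)) q :=
  (eval₂_assoc (f := RingHom.id K) (g := P) (q := g) (p := q)).symm

lemma iterF_succ_eval {K : Type*} [Field K] {N : ℕ}
    (F : Fin (N + 1) → MvPolynomial (Fin (N + 1)) K) (P : Fin (N + 1) → K) :
    ∀ (k : ℕ) (i : Fin (N + 1)),
      eval P (iterF F (k + 1) i) = eval (fun j => eval P (F j)) (iterF F k i) := by
  intro k
  induction k with
  | zero => intro i; simp [iterF, eval_aeval']
  | succ k ih =>
    intro i
    show eval P (aeval (iterF F (k + 1)) (F i)) = _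
    rw [eval_aeval']
    simp only [ih]
    rw [← eval_aeval']
    rfl

lemma julia_F_mem {K : Type*} [Field K] (v : AbsoluteValue K ℝ) {N : ℕ}
    (F : Fin (N + 1) → MvPolynomial (Fin (N + 1)) K) (P : Fin (N + 1) → K)
    (hP : P ∈ juliaSet v F) : (fun i => eval P (F i)) ∈ juliaSet v F := by
  intro h
  apply hP
  have : (fun k => supNorm v fun i => eval (fun j => eval P (F j)) (iterF F k i))
      = fun k => supNorm v fun i => eval P (iterF F (k + 1) i) := by
    funext k; congr 1; funext i; rw [iterF_succ_eval]
  rw [this] at h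
  exact (tendsto_add_atTop_iff_nat 1).mp h

lemma orbit_mem {K : Type*} [Field K] (v : AbsoluteValue K ℝ) {N : ℕ}
    (F : Fin (N + 1) → MvPolynomial (Fin (N + 1)) K)
    (I : Set (MvPolynomial (Fin (N + 1)) K))
    (hinv : ∀ P ∈ zeroLocus I, (fun i => eval P (F i)) ∈ zeroLocus I)
    (P : Fin (N + 1) → K) (hP : P ∈ juliaSet v F ∩ zeroLocus I) :
    ∀ k : ℕ, (fun i => eval P (iterF F k i)) ∈ juliaSet v F ∩ zeroLocus I := by
  intro k
  induction k with
  | zero => simpa [iterF] using hP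
  | succ k ih =>
    have hstep : (fun i => eval P (iterF F (k + 1) i))
        = fun i => eval (fun j => eval P (iterF F k j)) (F i) := by
      funext i
      show eval P (aeval (iterF F k) (F i)) = _
      rw [eval_aeval']
    rw [hstep]
    exact ⟨julia_F_mem v F _ ih.1, hinv _ ih.2⟩

lemma le_supNorm {K : Type*} [Field K] (v : AbsoluteValue K ℝ) {N : ℕ}
    (P : Fin (N + 1) → K) (i : Fin (N + 1)) : v (P i) ≤ supNorm v P :=
  Finset.le_sup' (fun i => v (P i)) (Finset.mem_univ i)

/-- Linearly independent families of polynomials of total degree ≤ n have size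
at most `(n+1)^(N+1)`. -/
lemma card_le_of_li {K : Type*} [Field K] {N n c : ℕ}
    (η : Fin c → MvPolynomial (Fin (N + 1)) K) (hli : LinearIndependent K η)
    (hdeg : ∀ m, (η m).totalDegree ≤ n) : c ≤ (n + 1) ^ (N + 1) := by
  classical
  set s : Set (Fin (N + 1) →₀ ℕ) := {f | ∀ i, f i ≤ n} with hs
  have hinj : Function.Injective
      (fun f : s => (fun i => (⟨f.1 i, Nat.lt_succ_of_le (f.2 i)⟩ : Fin (n + 1)))) := by
    intro f g hfg
    ext i
    have := congrFun hfg i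
    simpa using this
  haveI : Finite s := Finite.of_injective _ hinj
  haveI : Fintype s := Fintype.ofFinite s
  have hmem : ∀ m, η m ∈ restrictDegree (Fin (N + 1)) K n := fun m =>
    restrictTotalDegree_le_restrictDegree _ _ _
      ((mem_restrictTotalDegree _ _ _).mpr (hdeg m))
  set η' : Fin c → restrictDegree (Fin (N + 1)) K n := fun m => ⟨η m, hmem m⟩ with hη'
  have hli' : LinearIndependent K η' :=
    LinearIndependent.of_comp (restrictDegree (Fin (N + 1)) K n).subtype hli
  have h1 : c ≤ Module.finrank K (restrictDegree (Fin (N + 1)) K n) := by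
    simpa using hli'.fintype_card_le_finrank
  have h2 : Module.finrank K (restrictDegree (Fin (N + 1)) K n) = Fintype.card s :=
    Module.finrank_eq_card_basis (basisRestrictSupport K s)
  have h3 : Fintype.card s ≤ Fintype.card (Fin (N + 1) → Fin (n + 1)) :=
    Fintype.card_le_of_injective _ hinj
  have h4 : Fintype.card (Fin (N + 1) → Fin (n + 1)) = (n + 1) ^ (N + 1) := by simp
  omega

theorem stmt1 {K : Type*} [Field K] (N d : ℕ) (hN : 1 ≤ N) (hd : 2 ≤ d) :
    ∃ C : ℝ,
      ∀ (v : AbsoluteValue K ℝ) (F : Fin (N + 1) → MvPolynomial (Fin (N + 1)) K),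
        (∀ i, (F i).IsHomogeneous d) →
        ∀ I : Set (MvPolynomial (Fin (N + 1)) K),
          (∀ g ∈ I, ∃ m, g.IsHomogeneous m) →
          (∀ P ∈ zeroLocus I, (fun i => eval P (F i)) ∈ zeroLocus I) →
          ∀ R : ℝ, 0 ≤ R →
            (∀ P ∈ juliaSet v F ∩ zeroLocus I, supNorm v P ≤ R) →
            ∀ n : ℕ, 2 ≤ n → ∀ c : ℕ, 1 ≤ c →
              ∀ η : Fin c → MvPolynomial (Fin (N + 1)) K,
                LinearIndependent K η →
                (∀ m, IsSpecialForm F d n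
                  (Real.log n / Real.log ((2 * (N : ℝ) + 2) / (2 * (N : ℝ) + 1))) (η m)) →
                ∀ P : Fin c → Fin (N + 1) → K,
                  (∀ i, P i ∈ juliaSet v F ∩ zeroLocus I) →
                  v (Matrix.det (Matrix.of fun i m => eval (P i) (η m)))
                    ≤ Real.exp (C * max (Real.log R) 1 * Real.log n * c) := by
  classical
  set L : ℝ := Real.log ((2 * (N : ℝ) + 2) / (2 * (N : ℝ) + 1)) with hLdef
  have hL : 0 < L := by
    apply Real.log_pos
    rw [lt_div_iff₀ (by positivity)]
    linarith
  set A : ℝ := (d * (N + 1) : ℕ) / Real.log 2 + ((d - 1 : ℕ) : ℝ) / L with hAdef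
  have hA : 0 ≤ A := by positivity
  refine ⟨2 * (N + 1) + A, ?_⟩
  intro v F hF I hI hinv R hR hRbound n hn c hc η hli hsp P hP
  set mx : ℝ := max (Real.log R) 1 with hmx
  have hmx1 : 1 ≤ mx := le_max_right _ _
  have hlogn : Real.log 2 ≤ Real.log n := by
    apply Real.log_le_log (by norm_num)
    exact_mod_cast hn
  have hlogn0 : 0 < Real.log n :=
    Real.log_pos (by exact_mod_cast Nat.lt_of_lt_of_le one_lt_two hn)
  -- bound on orbit values
  have hvR : ∀ (i : Fin c) (k : ℕ) (s : Fin (N + 1)), v (eval (P i) (iterF F k s)) ≤ R := by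
    intro i k s
    have h := orbit_mem v F I hinv (P i) (hP i) k
    exact (le_supNorm v (fun s => eval (P i) (iterF F k s)) s).trans (hRbound _ h)
  set M : ℝ := max R 1 with hM
  have hM1 : (1 : ℝ) ≤ M := le_max_right _ _
  have hM0 : (0 : ℝ) < M := lt_of_lt_of_le one_pos hM1
  have hRM : R ≤ M := le_max_left _ _
  have hlogM : Real.log M ≤ mx := by
    rcases le_total R 1 with h | h
    · rw [hM, max_eq_right h]
      simpa using le_trans zero_le_one hmx1
    · rw [hM, max_eq_left h]
      exact le_max_left _ _
  have hlogM0 : 0 ≤ Real.log M := Real.log_nonneg hM1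
  -- entry bound
  set B : ℝ := Real.exp (A * Real.log n * mx) with hB
  have hent : ∀ (i : Fin c) (m : Fin c), v (eval (P i) (η m)) ≤ B := by
    intro i m
    obtain ⟨α, t, idx, k, j, hα, ht, hk, hj, hηeq, -⟩ := hsp m
    rw [hηeq, map_mul, v.map_mul]
    have hvP : ∀ s, v (P i s) ≤ M := by
      intro s
      have := hvR i 0 s
      simp only [iterF, eval_X] at this
      exact this.trans hRM
    have h1 : v (eval (P i) (monomial α (1 : K))) ≤ M ^ (∑ s, α s) := by
      rw [eval_monomial, one_mul]
      rw [Finsupp.prod_fintype _ _ (fun s => pow_zero _)]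
      rw [v.map_prod]
      calc ∏ s, v (P i s ^ α s) ≤ ∏ s, M ^ α s := by
            apply Finset.prod_le_prod (fun s _ => by positivity)
            intro s _
            rw [v.map_pow]
            exact pow_le_pow_left₀ (v.nonneg _) (hvP s) _
        _ = M ^ (∑ s, α s) := by rw [Finset.prod_pow_eq_pow_sum]
    have h2 : v (eval (P i) (∏ l, iterF F (k l) (idx l) ^ j l)) ≤ M ^ ((d - 1) * t) := by
      rw [map_prod, v.map_prod]
      simp only [map_pow]
      calc ∏ l, v (eval (P i) (iterF F (k l) (idx l))) ^ j l
          ≤ ∏ _l : Fin t, M ^ (d - 1) := by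
            apply Finset.prod_le_prod (fun l _ => by positivity)
            intro l _
            calc v (eval (P i) (iterF F (k l) (idx l))) ^ j l
                ≤ M ^ j l := pow_le_pow_left₀ (v.nonneg _) ((hvR i (k l) (idx l)).trans hRM) _
              _ ≤ M ^ (d - 1) := pow_le_pow_right₀ hM1 (hj l).2
        _ = M ^ ((d - 1) * t) := by
            rw [Finset.prod_const, ← pow_mul, Finset.card_univ, Fintype.card_fin, mul_comm]
    calc v (eval (P i) (monomial α (1:K))) * v (eval (P i) (∏ l, iterF F (k l) (idx l) ^ j l))
        ≤ M ^ (∑ s, α s) * M ^ ((d - 1) * t) :=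
          mul_le_mul h1 h2 (v.nonneg _) (by positivity)
      _ = M ^ ((∑ s, α s) + (d - 1) * t) := (pow_add M _ _).symm
      _ ≤ B := by
          rw [hB, ← Real.exp_log hM0, ← Real.exp_nat_mul, Real.exp_le_exp]
          have hdr : (2 : ℝ) ≤ (d : ℝ) := by exact_mod_cast hd
          have he : (((∑ s, α s) + (d - 1) * t : ℕ) : ℝ) ≤ A * Real.log n := by
            have h1' : (∑ x : Fin (N + 1), ((α x : ℝ))) ≤ (d : ℝ) * (N + 1) := by
              exact_mod_cast hα.le
            have h2' : ((d : ℝ) - 1) * t ≤ ((d : ℝ) - 1) * (Real.log n / L) :=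
              mul_le_mul_of_nonneg_left ht (by linarith)
            have h3' : (d : ℝ) * (N + 1) ≤ (d : ℝ) * (N + 1) / Real.log 2 * Real.log n := by
              rw [div_mul_eq_mul_div, le_div_iff₀ (Real.log_pos (by norm_num))]
              exact mul_le_mul_of_nonneg_left hlogn (by positivity)
            have heq : ((d : ℝ) - 1) * (Real.log n / L) = ((d : ℝ) - 1) / L * Real.log n := by
              ring
            rw [hAdef]
            push_cast [Nat.cast_sub (show 1 ≤ d by omega)]
            rw [add_mul]
            linarith
          calc (((∑ s, α s) + (d - 1) * t : ℕ) : ℝ) * Real.log M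
              ≤ (A * Real.log n) * mx :=
                mul_le_mul he hlogM hlogM0 (mul_nonneg hA hlogn0.le)
            _ = A * Real.log n * mx := rfl
  -- determinant bound
  have hdet : v (Matrix.det (Matrix.of fun i m => eval (P i) (η m)))
      ≤ (Nat.factorial c : ℝ) * B ^ c := by
    have := Matrix.det_le (A := Matrix.of fun i m => eval (P i) (η m)) (abv := v)
      (x := B) (fun i m => hent i m)
    simpa [nsmul_eq_mul] using this
  -- size bound on c
  have hcle : c ≤ (n + 1) ^ (N + 1) := by
    apply card_le_of_li η hli
    intro m
    obtain ⟨-, -, -, -, -, -, -, -, -, -, hhom⟩ := hsp m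
    exact hhom.totalDegree_le
  -- putting it together
  have hfact : (Nat.factorial c : ℝ) ≤ ((n + 1 : ℕ) : ℝ) ^ ((N + 1) * c) := by
    calc (Nat.factorial c : ℝ) ≤ (c : ℝ) ^ c := by exact_mod_cast Nat.factorial_le_pow c
      _ ≤ (((n + 1) ^ (N + 1) : ℕ) : ℝ) ^ c := by
          apply pow_le_pow_left₀ (by positivity)
          exact_mod_cast hcle
      _ = ((n + 1 : ℕ) : ℝ) ^ ((N + 1) * c) := by
          push_cast
          rw [← pow_mul]
  have hn1 : ((n + 1 : ℕ) : ℝ) ≤ Real.exp (2 * Real.log n) := by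
    have : ((n + 1 : ℕ) : ℝ) ≤ (n : ℝ) ^ 2 := by
      have : (n : ℝ) ≥ 2 := by exact_mod_cast hn
      push_cast
      nlinarith
    calc ((n + 1 : ℕ) : ℝ) ≤ (n : ℝ) ^ 2 := this
      _ = Real.exp (Real.log n) ^ 2 := by
          rw [Real.exp_log (by positivity)]
      _ = Real.exp (2 * Real.log n) := by
          rw [← Real.exp_nat_mul]
          norm_num
  calc v (Matrix.det (Matrix.of fun i m => eval (P i) (η m)))
      ≤ (Nat.factorial c : ℝ) * B ^ c := hdet
    _ ≤ ((n + 1 : ℕ) : ℝ) ^ ((N + 1) * c) * B ^ c := by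
        apply mul_le_mul_of_nonneg_right hfact (by positivity)
    _ ≤ Real.exp (2 * Real.log n) ^ ((N + 1) * c) * B ^ c := by
        apply mul_le_mul_of_nonneg_right _ (by positivity)
        exact pow_le_pow_left₀ (by positivity) hn1 _
    _ = Real.exp ((2 * (N + 1) * Real.log n + A * Real.log n * mx) * c) := by
        rw [hB, ← Real.exp_nat_mul, ← Real.exp_nat_mul, ← Real.exp_add]
        congr 1
        push_cast
        ring
    _ ≤ Real.exp ((2 * (N + 1) + A) * mx * Real.log n * c) := by
        rw [Real.exp_le_exp]
        apply mul_le_mul_of_nonneg_right _ (by positivity)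
        have h5 : 2 * ((N : ℝ) + 1) * Real.log n ≤ 2 * ((N : ℝ) + 1) * Real.log n * mx :=
          le_mul_of_one_le_right (by positivity) hmx1
        nlinarith [h5]
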